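/- Suppose Assumptions [A1] and [A2] hold and suppose c > 0 is a constant such that ⟨Φ(y), y − θ⟩ ≥ c·‖y − θ‖² for all y ∈ K. Then with M := 8·(r*)² + 8·r²·E[W²], for every n ≥ 1, E[‖θ̂_{n+1} − θ‖²] ≤ (1 − 2c·γ_n + 8·γ_n²)·E[‖θ̂_n − θ‖²] + M·γ_n². -/

import Mathlib

open MeasureTheory ProbabilityTheory Filter
open scoped ENNReal NNReal RealInnerProductSpace Topology

noncomputable section

/-- The sample space `ℝ^d`. -/
abbrev Vec (d : ℕ) := EuclideanSpace ℝ (Fin d)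

/-- The parameter space `ℝ^d × ℝ`, equipped with the euclidean (`L²`) norm. -/
abbrev Par (d : ℕ) := WithLp 2 (EuclideanSpace ℝ (Fin d) × ℝ)

/-- Build an element of the parameter space from a center and a radius. -/
def pmk {d : ℕ} (z : Vec d) (a : ℝ) : Par d :=
  (WithLp.equiv 2 (EuclideanSpace ℝ (Fin d) × ℝ)).symm (z, a)

/-- First (center) component of a parameter. -/
def pz {d : ℕ} (y : Par d) : Vec d := (WithLp.equiv 2 (EuclideanSpace ℝ (Fin d) × ℝ) y).1

/-- Second (radius) component of a parameter. -/
def pa {d : ℕ} (y : Par d) : ℝ := (WithLp.equiv 2 (EuclideanSpace ℝ (Fin d) × ℝ) y).2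

/-- `Hgrad x y` is the gradient in `y = (z, a)` of `g(x,y) = (‖x - z‖ - a)²/2`, i.e.
`(z - x - a (z-x)/‖z-x‖, a - ‖z-x‖)`. -/
def Hgrad {d : ℕ} (x : Vec d) (y : Par d) : Par d :=
  pmk (pz y - x - pa y • (‖pz y - x‖⁻¹ • (pz y - x))) (pa y - ‖pz y - x‖)

/-- `Phi P X y = E[Hgrad (X) y]`, the gradient of `G(y) = E[(‖X-z‖-a)²]/2`. -/
def Phi {Ω : Type*} [MeasurableSpace Ω] {d : ℕ} (P : Measure Ω) (X : Ω → Vec d)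
    (y : Par d) : Par d :=
  ∫ ω, Hgrad (X ω) y ∂P

/-- Quadratic form `v ↦ vᵀ Γ(z) v` of the matrix
`Γ(z) = E[(1/‖X-z‖)(I_d - (X-z)(X-z)ᵀ/‖X-z‖²)]`. -/
def GammaQF {Ω : Type*} [MeasurableSpace Ω] {d : ℕ} (P : Measure Ω) (X : Ω → Vec d)
    (z v : Vec d) : ℝ :=
  ∫ ω, ‖X ω - z‖⁻¹ * (‖v‖ ^ 2 - ⟪X ω - z, v⟫ ^ 2 / ‖X ω - z‖ ^ 2) ∂P

/-- The Hessian matrix `Γ_y` of `G` at `y = (z, a)`, applied to a vector `y' = (z', a')`: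
`Γ_y = [[I_d - a E[(1/‖X-z‖)(I_d - (X-z)(X-z)ᵀ/‖X-z‖²)], E[(X-z)/‖X-z‖]], [E[(X-z)/‖X-z‖]ᵀ, 1]]`. -/
def GammaAt {Ω : Type*} [MeasurableSpace Ω] {d : ℕ} (P : Measure Ω) (X : Ω → Vec d)
    (y y' : Par d) : Par d :=
  pmk (pz y' - pa y • (∫ ω, ‖X ω - pz y‖⁻¹ •
          (pz y' - (⟪X ω - pz y, pz y'⟫ / ‖X ω - pz y‖ ^ 2) • (X ω - pz y)) ∂P)
        + pa y' • ∫ ω, ‖X ω - pz y‖⁻¹ • (X ω - pz y) ∂P)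
      (⟪∫ ω, ‖X ω - pz y‖⁻¹ • (X ω - pz y) ∂P, pz y'⟫ + pa y')

/-!
The projection is nonexpansive and fixes `θ`, so
`‖θ̂ₙ₊₁ - θ‖² ≤ ‖θ̂ₙ - θ‖² - 2γₙ⟪H(Xₙ₊₁, θ̂ₙ), θ̂ₙ - θ⟫ + γₙ²‖H(Xₙ₊₁, θ̂ₙ)‖²`.
The iterate `θ̂ₙ` is a measurable function of `X₂, …, Xₙ`, hence independent of `Xₙ₊₁`; integrating
first in `Xₙ₊₁` turns the middle term into `E⟪Φ(θ̂ₙ), θ̂ₙ - θ⟫ ≥ c E‖θ̂ₙ - θ‖²`. The last term is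
controlled by `‖H(x, y)‖² ≤ 2(‖z - x‖ - a)² ≤ 8‖y - θ‖² + 8r*² + 8‖x - μ‖²` together with
`E‖X - μ‖² = r² E[W²]`. All iterates stay in the compact set `K`, which makes every term integrable.
-/

open Function

section Par

variable {d : ℕ}

lemma continuous_pz : Continuous (pz (d := d)) :=
  (WithLp.prodContinuousLinearEquiv 2 ℝ (Vec d) ℝ).continuous.fst

lemma continuous_pa : Continuous (pa (d := d)) :=
  (WithLp.prodContinuousLinearEquiv 2 ℝ (Vec d) ℝ).continuous.snd

lemma continuous_pmk : Continuous (uncurry (pmk (d := d))) :=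
  (WithLp.prodContinuousLinearEquiv 2 ℝ (Vec d) ℝ).symm.continuous

@[simp] lemma pz_pmk (z : Vec d) (a : ℝ) : pz (pmk z a) = z := rfl
@[simp] lemma pa_pmk (z : Vec d) (a : ℝ) : pa (pmk z a) = a := rfl
@[simp] lemma pz_sub (u v : Par d) : pz (u - v) = pz u - pz v := rfl
@[simp] lemma pa_sub (u v : Par d) : pa (u - v) = pa u - pa v := rfl

lemma norm_sq_eq_norm_pz_sq_add_pa_sq (y : Par d) : ‖y‖ ^ 2 = ‖pz y‖ ^ 2 + pa y ^ 2 := by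
  simpa [pz, pa, Real.norm_eq_abs, sq_abs] using WithLp.prod_norm_sq_eq_of_L2 y

lemma measurable_Hgrad : Measurable (uncurry (Hgrad (d := d))) := by
  have hpa : Measurable fun p : Vec d × Par d => pa p.2 :=
    continuous_pa.measurable.comp measurable_snd
  have hsub : Measurable fun p : Vec d × Par d => pz p.2 - p.1 :=
    (continuous_pz.measurable.comp measurable_snd).sub measurable_fst
  exact continuous_pmk.measurable.comp <|
    (hsub.sub (hpa.smul (hsub.norm.inv.smul hsub))).prodMk (hpa.sub hsub.norm)

lemma measurable_proj_step {proj : Par d → Par d} (hproj : Continuous proj) (γ : ℝ) :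
    Measurable (uncurry fun (y : Par d) (x : Vec d) => proj (y - γ • Hgrad x y)) :=
  hproj.measurable.comp <|
    measurable_fst.sub ((measurable_Hgrad.comp measurable_swap).const_smul γ)

lemma norm_Hgrad_sq_le (x : Vec d) (y : Par d) :
    ‖Hgrad x y‖ ^ 2 ≤ 2 * (‖pz y - x‖ - pa y) ^ 2 := by
  set v := pz y - x
  have hfst : ‖v - pa y • (‖v‖⁻¹ • v)‖ ≤ |‖v‖ - pa y| := by
    rcases eq_or_ne v 0 with hv | hv
    · simp [hv]
    · have hpos : 0 < ‖v‖ := norm_pos_iff.mpr hv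
      have hv' : v - pa y • (‖v‖⁻¹ • v) = ((‖v‖ - pa y) / ‖v‖) • v := by
        rw [smul_smul, div_eq_mul_inv, sub_mul, mul_inv_cancel₀ hpos.ne', sub_smul, one_smul]
      rw [hv', norm_smul, norm_div, Real.norm_eq_abs, norm_norm,
        div_mul_cancel₀ _ hpos.ne']
  rw [Hgrad, norm_sq_eq_norm_pz_sq_add_pa_sq, pz_pmk, pa_pmk]
  nlinarith [sq_abs (‖v‖ - pa y), pow_le_pow_left₀ (norm_nonneg _) hfst 2]

/-- Split `‖z - x‖ - a = (‖z - x‖ - ‖x - μ‖) + (r - a) + (‖x - μ‖ - r)`; the first two terms are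
bounded by `‖y - pmk μ r‖`. -/
lemma norm_Hgrad_sq_le_of_center (x μ : Vec d) (r : ℝ) (y : Par d) :
    ‖Hgrad x y‖ ^ 2 ≤ 8 * ‖y - pmk μ r‖ ^ 2 + 8 * r ^ 2 + 8 * ‖x - μ‖ ^ 2 := by
  have hy : ‖y - pmk μ r‖ ^ 2 = ‖pz y - μ‖ ^ 2 + (pa y - r) ^ 2 := by
    rw [norm_sq_eq_norm_pz_sq_add_pa_sq, pz_sub, pa_sub, pz_pmk, pa_pmk]
  have htri : |‖pz y - x‖ - ‖x - μ‖| ≤ ‖pz y - μ‖ := by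
    simpa [norm_sub_rev x μ] using abs_norm_sub_norm_le (pz y - x) (μ - x)
  have hsq : (‖pz y - x‖ - ‖x - μ‖) ^ 2 ≤ ‖pz y - μ‖ ^ 2 := by
    simpa [sq_abs] using pow_le_pow_left₀ (abs_nonneg _) htri 2
  nlinarith [norm_Hgrad_sq_le x y, sq_nonneg (‖pz y - x‖ - ‖x - μ‖ - (r - pa y)),
    sq_nonneg (‖pz y - x‖ - ‖x - μ‖ + (r - pa y) - (‖x - μ‖ - r)), sq_nonneg (‖x - μ‖ + r)]

end Par

lemma sq_norm_proj_step_sub_le {E : Type*} [NormedAddCommGroup E] [InnerProductSpace ℝ E]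
    {proj : E → E} (hproj : LipschitzWith 1 proj) {θ : E} (hθ : proj θ = θ) (y h : E)
    (γ : ℝ) :
    ‖proj (y - γ • h) - θ‖ ^ 2 ≤ ‖y - θ‖ ^ 2 - 2 * γ * ⟪h, y - θ⟫ + γ ^ 2 * ‖h‖ ^ 2 := by
  have hlip : ‖proj (y - γ • h) - θ‖ ≤ ‖(y - θ) - γ • h‖ := by
    simpa [hθ, dist_eq_norm, sub_right_comm] using hproj.dist_le_mul (y - γ • h) θ
  calc ‖proj (y - γ • h) - θ‖ ^ 2 ≤ ‖(y - θ) - γ • h‖ ^ 2 :=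
        pow_le_pow_left₀ (norm_nonneg _) hlip 2
    _ = ‖y - θ‖ ^ 2 - 2 * γ * ⟪h, y - θ⟫ + γ ^ 2 * ‖h‖ ^ 2 := by
        rw [norm_sub_sq_real, real_inner_smul_right, real_inner_comm, norm_smul,
          Real.norm_eq_abs, mul_pow, sq_abs]
        ring

section Independence

variable {Ω α β E : Type*} [MeasurableSpace Ω] [MeasurableSpace α] [MeasurableSpace β]
  [NormedAddCommGroup E] {P : Measure Ω} [IsFiniteMeasure P]
  {X : Ω → α} {Y : Ω → β} {F : α → β → E}

lemma ProbabilityTheory.IndepFun.integrable_comp_prod_iff (hXY : IndepFun X Y P)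
    (hX : Measurable X) (hY : Measurable Y) (hF : StronglyMeasurable (uncurry F)) :
    Integrable (fun ω => F (X ω) (Y ω)) P ↔
      Integrable (uncurry F) ((P.map X).prod (P.map Y)) := by
  rw [← (indepFun_iff_map_prod_eq_prod_map_map hX.aemeasurable hY.aemeasurable).1 hXY,
    integrable_map_measure hF.aestronglyMeasurable (hX.prodMk hY).aemeasurable]
  rfl

lemma ProbabilityTheory.IndepFun.integrable_integral_comp [NormedSpace ℝ E]
    (hXY : IndepFun X Y P) (hX : Measurable X) (hY : Measurable Y)
    (hF : StronglyMeasurable (uncurry F))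
    (hint : Integrable (fun ω => F (X ω) (Y ω)) P) :
    Integrable (fun ω => ∫ ω', F (X ω') (Y ω) ∂P) P := by
  have h := ((hXY.integrable_comp_prod_iff hX hY hF).1 hint).integral_prod_right
  rw [integrable_map_measure h.aestronglyMeasurable hY.aemeasurable] at h
  refine h.congr (ae_of_all _ fun ω => ?_)
  exact integral_map hX.aemeasurable (hF.comp_measurable (measurable_id.prodMk
    measurable_const)).aestronglyMeasurable

lemma ProbabilityTheory.IndepFun.integral_comp_eq_integral_integral [NormedSpace ℝ E]
    (hXY : IndepFun X Y P) (hX : Measurable X) (hY : Measurable Y)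
    (hF : StronglyMeasurable (uncurry F))
    (hint : Integrable (fun ω => F (X ω) (Y ω)) P) :
    ∫ ω, F (X ω) (Y ω) ∂P = ∫ ω, ∫ ω', F (X ω') (Y ω) ∂P ∂P := by
  have hprod := (hXY.integrable_comp_prod_iff hX hY hF).1 hint
  calc ∫ ω, F (X ω) (Y ω) ∂P = ∫ p, uncurry F p ∂((P.map X).prod (P.map Y)) := by
        rw [← (indepFun_iff_map_prod_eq_prod_map_map hX.aemeasurable hY.aemeasurable).1 hXY,
          integral_map (hX.prodMk hY).aemeasurable hF.aestronglyMeasurable]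
        rfl
    _ = ∫ y, ∫ x, F x y ∂(P.map X) ∂(P.map Y) := integral_prod_symm _ hprod
    _ = ∫ ω, ∫ ω', F (X ω') (Y ω) ∂P ∂P := by
        refine (integral_map hY.aemeasurable hprod.integral_prod_right.aestronglyMeasurable).trans
          (integral_congr_ae (ae_of_all _ fun ω => ?_))
        exact integral_map hX.aemeasurable (hF.comp_measurable (measurable_id.prodMk
          measurable_const)).aestronglyMeasurable

end Independence

section Recursion

variable {Ω α β : Type*} {Xs : ℕ → Ω → α} {θ : ℕ → Ω → β} {f : ℕ → β → α → β} {θ₁ : β}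

lemma mem_of_recursion {K : Set β} (hθ₁ : θ₁ ∈ K) (hf : ∀ n, ∀ y ∈ K, ∀ x, f n y x ∈ K)
    (hinit : ∀ ω, θ 1 ω = θ₁)
    (hrec : ∀ n, 1 ≤ n → ∀ ω, θ (n + 1) ω = f n (θ n ω) (Xs (n + 1) ω)) :
    ∀ n, 1 ≤ n → ∀ ω, θ n ω ∈ K := by
  intro n hn
  induction n, hn using Nat.le_induction with
  | base => exact fun ω => hinit ω ▸ hθ₁
  | succ k hk ih => exact fun ω => hrec k hk ω ▸ hf k _ (ih ω) _

variable [mα : MeasurableSpace α] [MeasurableSpace β]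

lemma measurable_past_of_recursion (hf : ∀ n, Measurable (uncurry (f n)))
    (hinit : ∀ ω, θ 1 ω = θ₁)
    (hrec : ∀ n, 1 ≤ n → ∀ ω, θ (n + 1) ω = f n (θ n ω) (Xs (n + 1) ω)) :
    ∀ n, 1 ≤ n → Measurable[⨆ i ∈ Set.Iic n, mα.comap (Xs i)] (θ n) := by
  intro n hn
  induction n, hn using Nat.le_induction with
  | base =>
    rw [show θ 1 = fun _ => θ₁ from funext hinit]
    exact measurable_const
  | succ k hk ih =>
    rw [show θ (k + 1) = fun ω => f k (θ k ω) (Xs (k + 1) ω) from funext (hrec k hk)]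
    have hpast : Measurable[⨆ i ∈ Set.Iic (k + 1), mα.comap (Xs i)] (θ k) :=
      ih.mono (biSup_mono fun i hi => Set.Iic_subset_Iic.2 k.le_succ hi) le_rfl
    have hnew : Measurable[⨆ i ∈ Set.Iic (k + 1), mα.comap (Xs i)] (Xs (k + 1)) :=
      (comap_measurable (Xs (k + 1))).mono
        (le_iSup₂_of_le (k + 1) (Set.mem_Iic.2 le_rfl) le_rfl) le_rfl
    exact (hf k).comp (hpast.prodMk hnew)

lemma indepFun_of_recursion [MeasurableSpace Ω] {P : Measure Ω} (hXs : ∀ n, Measurable (Xs n))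
    (hiid : iIndepFun Xs P) (hf : ∀ n, Measurable (uncurry (f n))) (hinit : ∀ ω, θ 1 ω = θ₁)
    (hrec : ∀ n, 1 ≤ n → ∀ ω, θ (n + 1) ω = f n (θ n ω) (Xs (n + 1) ω)) {n : ℕ} (hn : 1 ≤ n) :
    IndepFun (θ n) (Xs (n + 1)) P := by
  have hdisj : Disjoint (Set.Iic n) {n + 1} := by simp
  have h := indep_iSup_of_disjoint (fun i => (hXs i).comap_le) hiid.iIndep hdisj
  rw [iSup_singleton] at h
  exact (IndepFun_iff_Indep _ _ _).2 <| indep_of_indep_of_le_left h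
    (measurable_past_of_recursion hf hinit hrec n hn).comap_le

lemma measurable_of_recursion [MeasurableSpace Ω] (hXs : ∀ n, Measurable (Xs n))
    (hf : ∀ n, Measurable (uncurry (f n)))
    (hinit : ∀ ω, θ 1 ω = θ₁)
    (hrec : ∀ n, 1 ≤ n → ∀ ω, θ (n + 1) ω = f n (θ n ω) (Xs (n + 1) ω)) {n : ℕ} (hn : 1 ≤ n) :
    Measurable (θ n) :=
  (measurable_past_of_recursion hf hinit hrec n hn).mono
    (iSup₂_le fun i _ => (hXs i).comap_le) le_rfl

end Recursion

section Integration

variable {Ω : Type*} [MeasurableSpace Ω] {P : Measure Ω}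

lemma integrable_comp_of_forall_mem_isCompact [IsFiniteMeasure P] {β : Type*}
    [TopologicalSpace β] [MeasurableSpace β] [OpensMeasurableSpace β] {K : Set β}
    (hK : IsCompact K) {g : β → ℝ} (hg : Continuous g) {Y : Ω → β} (hY : Measurable Y)
    (hYK : ∀ ω, Y ω ∈ K) :
    Integrable (fun ω => g (Y ω)) P := by
  obtain ⟨C, hC⟩ := hK.exists_bound_of_continuousOn hg.continuousOn
  exact .of_bound (hg.measurable.comp hY).aestronglyMeasurable C
    (ae_of_all _ fun ω => hC _ (hYK ω))

lemma integrable_inner_of_integrable_sq_norm {E : Type*} [NormedAddCommGroup E]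
    [InnerProductSpace ℝ E] {f g : Ω → E} (hf : AEStronglyMeasurable f P)
    (hg : AEStronglyMeasurable g P) (hf2 : Integrable (fun ω => ‖f ω‖ ^ 2) P)
    (hg2 : Integrable (fun ω => ‖g ω‖ ^ 2) P) :
    Integrable (fun ω => ⟪f ω, g ω⟫) P := by
  refine ((hf2.add hg2).div_const 2).mono' (hf.inner hg) (ae_of_all _ fun ω => ?_)
  rw [Real.norm_eq_abs, Pi.add_apply]
  nlinarith [abs_real_inner_le_norm (f ω) (g ω), two_mul_le_add_sq ‖f ω‖ ‖g ω‖]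

lemma integral_le_of_descent_step [IsProbabilityMeasure P] {a a' b s : Ω → ℝ} {γ c R : ℝ}
    (hγ : 0 ≤ γ) (ha : Integrable a P) (ha' : Integrable a' P) (hb : Integrable b P)
    (hs : Integrable s P)
    (hstep : ∀ ω, a' ω ≤ a ω - 2 * γ * b ω + γ ^ 2 * (8 * a ω + 8 * R + 8 * s ω))
    (hb_ge : c * ∫ ω, a ω ∂P ≤ ∫ ω, b ω ∂P) :
    ∫ ω, a' ω ∂P ≤
      (1 - 2 * c * γ + 8 * γ ^ 2) * ∫ ω, a ω ∂P + (8 * R + 8 * ∫ ω, s ω ∂P) * γ ^ 2 := by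
  have hrhs : ∫ ω, (a ω - 2 * γ * b ω + γ ^ 2 * (8 * a ω + 8 * R + 8 * s ω)) ∂P
      = ∫ ω, a ω ∂P - 2 * γ * ∫ ω, b ω ∂P
        + γ ^ 2 * (8 * ∫ ω, a ω ∂P + 8 * R + 8 * ∫ ω, s ω ∂P) := by
    rw [integral_add (by fun_prop) (by fun_prop), integral_sub ha (by fun_prop),
      integral_const_mul, integral_const_mul, integral_add (by fun_prop) (by fun_prop),
      integral_add (by fun_prop) (by fun_prop), integral_const_mul, integral_const_mul,
      integral_const_mul, integral_const]
    simp
  have hmono := integral_mono ha' (by fun_prop) hstep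
  rw [hrhs] at hmono
  nlinarith [mul_le_mul_of_nonneg_left hb_ge hγ]

end Integration

section Descent

variable {Ω : Type*} [MeasurableSpace Ω] {P : Measure Ω} {d : ℕ}

lemma integrable_norm_Hgrad_sq [IsFiniteMeasure P] {Z : Ω → Vec d} {Y : Ω → Par d} {μ : Vec d}
    {a : ℝ} (hZ : AEMeasurable Z P) (hY : AEMeasurable Y P)
    (hZ2 : Integrable (fun ω => ‖Z ω - μ‖ ^ 2) P)
    (hY2 : Integrable (fun ω => ‖Y ω - pmk μ a‖ ^ 2) P) :
    Integrable (fun ω => ‖Hgrad (Z ω) (Y ω)‖ ^ 2) P := by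
  refine (((hY2.const_mul 8).add (integrable_const (8 * a ^ 2))).add (hZ2.const_mul 8)).mono'
    ((measurable_Hgrad.comp_aemeasurable (hZ.prodMk hY)).norm.pow_const 2).aestronglyMeasurable
    (ae_of_all _ fun ω => ?_)
  rw [Real.norm_eq_abs, abs_of_nonneg (by positivity)]
  exact norm_Hgrad_sq_le_of_center _ μ a _

lemma integral_inner_Hgrad_eq_inner_Phi [IsProbabilityMeasure P] {X Z : Ω → Vec d} {μ : Vec d}
    (hZX : IdentDistrib Z X P P) (hX2 : Integrable (fun ω => ‖X ω - μ‖ ^ 2) P) (y v : Par d) :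
    ∫ ω, ⟪Hgrad (Z ω) y, v⟫ ∂P = ⟪Phi P X y, v⟫ := by
  have hint : Integrable (fun ω => Hgrad (X ω) y) P :=
    ((memLp_two_iff_integrable_sq_norm
      (measurable_Hgrad.of_uncurry_right.comp_aemeasurable
        hZX.aemeasurable_snd).aestronglyMeasurable).2
      (integrable_norm_Hgrad_sq (a := 0) hZX.aemeasurable_snd aemeasurable_const hX2
        (integrable_const _))).integrable one_le_two
  calc ∫ ω, ⟪Hgrad (Z ω) y, v⟫ ∂P = ∫ ω, ⟪v, Hgrad (X ω) y⟫ ∂P := by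
        have hm : Measurable fun x : Vec d => ⟪v, Hgrad x y⟫ :=
          measurable_const.inner measurable_Hgrad.of_uncurry_right
        simp_rw [real_inner_comm v]
        exact (hZX.comp hm).integral_eq
    _ = ⟪Phi P X y, v⟫ := by rw [integral_inner hint, real_inner_comm]; rfl

lemma integral_inner_Hgrad_ge [IsProbabilityMeasure P] {X Z : Ω → Vec d} {Y : Ω → Par d}
    {μ : Vec d} {θ : Par d} {K : Set (Par d)} {c : ℝ} (hZY : IndepFun Z Y P)
    (hZ : Measurable Z) (hY : Measurable Y) (hZX : IdentDistrib Z X P P)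
    (hX2 : Integrable (fun ω => ‖X ω - μ‖ ^ 2) P) (hYK : ∀ ω, Y ω ∈ K)
    (hconv : ∀ y ∈ K, ⟪Phi P X y, y - θ⟫ ≥ c * ‖y - θ‖ ^ 2)
    (hY2 : Integrable (fun ω => ‖Y ω - θ‖ ^ 2) P)
    (hint : Integrable (fun ω => ⟪Hgrad (Z ω) (Y ω), Y ω - θ⟫) P) :
    c * ∫ ω, ‖Y ω - θ‖ ^ 2 ∂P ≤ ∫ ω, ⟪Hgrad (Z ω) (Y ω), Y ω - θ⟫ ∂P := by
  have hF : StronglyMeasurable (uncurry fun (x : Vec d) (y : Par d) => ⟪Hgrad x y, y - θ⟫) :=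
    (measurable_Hgrad.inner (measurable_snd.sub measurable_const)).stronglyMeasurable
  rw [hZY.integral_comp_eq_integral_integral hZ hY hF hint, ← integral_const_mul]
  refine integral_mono (hY2.const_mul c) (hZY.integrable_integral_comp hZ hY hF hint)
    fun ω => ?_
  simp only [integral_inner_Hgrad_eq_inner_Phi hZX hX2]
  exact hconv _ (hYK ω)

lemma integral_norm_sub_sq_eq [IsProbabilityMeasure P] {X Z U : Ω → Vec d} {W : Ω → ℝ}
    {μ : Vec d} {r : ℝ} (hZX : IdentDistrib Z X P P) (hX : ∀ ω, X ω = μ + (r * W ω) • U ω)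
    (hU : ∀ ω, ‖U ω‖ = 1) :
    ∫ ω, ‖Z ω - μ‖ ^ 2 ∂P = r ^ 2 * ∫ ω, W ω ^ 2 ∂P := by
  have hm : Measurable fun x : Vec d => ‖x - μ‖ ^ 2 := by fun_prop
  rw [← integral_const_mul]
  refine (hZX.comp hm).integral_eq.trans (integral_congr_ae (ae_of_all _ fun ω => ?_))
  simp [hX, norm_smul, hU, mul_pow]

lemma integral_sq_dist_proj_step_le [IsProbabilityMeasure P] {X Z : Ω → Vec d}
    {Y : Ω → Par d} {μ : Vec d} {a γ c : ℝ} {K : Set (Par d)} {proj : Par d → Par d}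
    (hK : IsCompact K) (hprojLip : LipschitzWith 1 proj) (hprojθ : proj (pmk μ a) = pmk μ a)
    (hprojK : ∀ y, proj y ∈ K) (hZY : IndepFun Z Y P) (hZ : Measurable Z) (hY : Measurable Y)
    (hYK : ∀ ω, Y ω ∈ K) (hZX : IdentDistrib Z X P P)
    (hX2 : Integrable (fun ω => ‖X ω - μ‖ ^ 2) P)
    (hconv : ∀ y ∈ K, ⟪Phi P X y, y - pmk μ a⟫ ≥ c * ‖y - pmk μ a‖ ^ 2) (hγ : 0 ≤ γ) :
    ∫ ω, ‖proj (Y ω - γ • Hgrad (Z ω) (Y ω)) - pmk μ a‖ ^ 2 ∂P ≤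
      (1 - 2 * c * γ + 8 * γ ^ 2) * ∫ ω, ‖Y ω - pmk μ a‖ ^ 2 ∂P
        + (8 * a ^ 2 + 8 * ∫ ω, ‖Z ω - μ‖ ^ 2 ∂P) * γ ^ 2 := by
  have hdist : Continuous fun y : Par d => ‖y - pmk μ a‖ ^ 2 := by fun_prop
  have hY2 := integrable_comp_of_forall_mem_isCompact (P := P) hK hdist hY hYK
  have hnext2 := integrable_comp_of_forall_mem_isCompact (P := P) hK hdist
    ((measurable_proj_step hprojLip.continuous γ).comp (hY.prodMk hZ)) fun ω => hprojK _
  have hZ2 : Integrable (fun ω => ‖Z ω - μ‖ ^ 2) P :=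
    (hZX.comp (by fun_prop : Measurable fun x : Vec d => ‖x - μ‖ ^ 2)).integrable_iff.2 hX2
  have hint : Integrable (fun ω => ⟪Hgrad (Z ω) (Y ω), Y ω - pmk μ a⟫) P :=
    integrable_inner_of_integrable_sq_norm
      (measurable_Hgrad.comp (hZ.prodMk hY)).aestronglyMeasurable
      (hY.sub_const _).aestronglyMeasurable
      (integrable_norm_Hgrad_sq hZ.aemeasurable hY.aemeasurable hZ2 hY2) hY2
  refine integral_le_of_descent_step hγ hY2 hnext2 hint hZ2 (fun ω => ?_)
    (integral_inner_Hgrad_ge hZY hZ hY hZX hX2 hYK hconv hY2 hint)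
  refine (sq_norm_proj_step_sub_le hprojLip hprojθ _ _ _).trans ?_
  gcongr
  exact norm_Hgrad_sq_le_of_center _ μ a _

end Descent

theorem statement15_general
    {Ω : Type*} [MeasurableSpace Ω] (P : Measure Ω) [IsProbabilityMeasure P]
    {d : ℕ}
    (μ : Vec d) (r : ℝ)
    (W : Ω → ℝ) (U : Ω → Vec d)
    (hUnorm : ∀ ω, ‖U ω‖ = 1)
    (X : Ω → Vec d) (hX : ∀ ω, X ω = μ + (r * W ω) • U ω)
    (rstar : ℝ)
    (hA2 : Integrable (fun ω => ‖X ω - μ‖ ^ 2) P)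
    (K : Set (Par d)) (hKcomp : IsCompact K)
    (hθK : pmk μ rstar ∈ K)
    (proj : Par d → Par d)
    (hprojLip : LipschitzWith 1 proj)
    (hprojK : ∀ y ∈ K, proj y = y)
    (hprojF : ∀ y ∉ K, proj y ∈ frontier K)
    (Xs : ℕ → Ω → Vec d) (hXsm : ∀ n, Measurable (Xs n))
    (hiid : iIndepFun Xs P)
    (hid : ∀ n, IdentDistrib (Xs n) X P P)
    (γ : ℕ → ℝ) (hγpos : ∀ n, 0 < γ n)
    (θhat : ℕ → Ω → Par d) (θ₁ : Par d) (hθ₁K : θ₁ ∈ K) (hinit : ∀ ω, θhat 1 ω = θ₁)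
    (hrec : ∀ n, 1 ≤ n → ∀ ω,
      θhat (n + 1) ω = proj (θhat n ω - γ n • Hgrad (Xs (n + 1) ω) (θhat n ω)))
    (c : ℝ)
    (hconv : ∀ y ∈ K, ⟪Phi P X y, y - pmk μ rstar⟫ ≥ c * ‖y - pmk μ rstar‖ ^ 2)
    :
    ∀ n : ℕ, 1 ≤ n →
      ∫ ω, ‖θhat (n + 1) ω - pmk μ rstar‖ ^ 2 ∂P ≤
        (1 - 2 * c * γ n + 8 * γ n ^ 2) * ∫ ω, ‖θhat n ω - pmk μ rstar‖ ^ 2 ∂P +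
          (8 * rstar ^ 2 + 8 * r ^ 2 * ∫ ω, W ω ^ 2 ∂P) * γ n ^ 2 := by
  intro n hn
  have hproj_mem (y : Par d) : proj y ∈ K := by
    by_cases hy : y ∈ K
    · rwa [hprojK y hy]
    · exact hKcomp.isClosed.frontier_subset (hprojF y hy)
  have hf (k : ℕ) := measurable_proj_step hprojLip.continuous (γ k)
  have hmem := mem_of_recursion (f := fun k y x => proj (y - γ k • Hgrad x y)) hθ₁K
    (fun _ _ _ _ => hproj_mem _) hinit hrec
  have h := integral_sq_dist_proj_step_le hKcomp hprojLip (hprojK _ hθK) hproj_mem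
    (indepFun_of_recursion hXsm hiid hf hinit hrec hn).symm (hXsm _)
    (measurable_of_recursion hXsm hf hinit hrec hn) (hmem n hn) (hid _) hA2 hconv (hγpos n).le
  rw [integral_norm_sub_sq_eq (hid (n + 1)) hX hUnorm, ← mul_assoc] at h
  simpa only [hrec n hn] using h

theorem statement15
    {Ω : Type*} [MeasurableSpace Ω] (P : Measure Ω) [IsProbabilityMeasure P]
    {d : ℕ} (hd : 2 ≤ d)
    (μ : Vec d) (r : ℝ) (hr : 0 < r)
    (W : Ω → ℝ) (U : Ω → Vec d)
    (hWm : Measurable W) (hUm : Measurable U)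
    (hWpos : ∀ ω, 0 < W ω) (hUnorm : ∀ ω, ‖U ω‖ = 1)
    (hindep : IndepFun W U P)
    (X : Ω → Vec d) (hX : ∀ ω, X ω = μ + (r * W ω) • U ω)
    (rstar : ℝ) (hrstar : rstar = r * ∫ ω, W ω ∂P)
    (hA1 : Integrable (fun ω => (‖X ω - μ‖ ^ 2)⁻¹) P)
    (hA2 : Integrable (fun ω => ‖X ω - μ‖ ^ 2) P)
    (K : Set (Par d)) (hKcomp : IsCompact K) (hKconv : Convex ℝ K)
    (hθK : pmk μ rstar ∈ K)
    (proj : Par d → Par d)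
    (hprojLip : LipschitzWith 1 proj)
    (hprojK : ∀ y ∈ K, proj y = y)
    (hprojF : ∀ y ∉ K, proj y ∈ frontier K)
    (Xs : ℕ → Ω → Vec d) (hXsm : ∀ n, Measurable (Xs n))
    (hiid : iIndepFun Xs P)
    (hid : ∀ n, IdentDistrib (Xs n) X P P)
    (γ : ℕ → ℝ) (hγpos : ∀ n, 0 < γ n)
    (θhat : ℕ → Ω → Par d) (θ₁ : Par d) (hθ₁K : θ₁ ∈ K) (hinit : ∀ ω, θhat 1 ω = θ₁)
    (hrec : ∀ n, 1 ≤ n → ∀ ω,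
      θhat (n + 1) ω = proj (θhat n ω - γ n • Hgrad (Xs (n + 1) ω) (θhat n ω)))
    (c : ℝ) (hc : 0 < c)
    (hconv : ∀ y ∈ K, ⟪Phi P X y, y - pmk μ rstar⟫ ≥ c * ‖y - pmk μ rstar‖ ^ 2)
    :
    ∀ n : ℕ, 1 ≤ n →
      ∫ ω, ‖θhat (n + 1) ω - pmk μ rstar‖ ^ 2 ∂P ≤
        (1 - 2 * c * γ n + 8 * γ n ^ 2) * ∫ ω, ‖θhat n ω - pmk μ rstar‖ ^ 2 ∂P +
          (8 * rstar ^ 2 + 8 * r ^ 2 * ∫ ω, W ω ^ 2 ∂P) * γ n ^ 2 :=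
  statement15_general P μ r W U hUnorm X hX rstar hA2 K hKcomp hθK proj hprojLip hprojK hprojF Xs
    hXsm hiid hid γ hγpos θhat θ₁ hθ₁K hinit hrec c hconv

end
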